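/- arXiv:2307.03864 — 3 statements merged into one kernel-verified Lean document; each statement's English description precedes it below -/
import Mathlib

section
/- Among all optimal policies of a POMDP M, any optimal policy π* with minimal policy memory length satisfies l_mem(π*) ≤ l_value(π*). -/
open Finset

/-- A function of a full history (a list of past (observation, action) pairs, most recent
last) *depends only on the last `k` steps of history* if it agrees on any two histories
of the same length that share their last `k` (observation, action) pairs. -/
def CtxDep {O A : Type*} {β : Type*} (k : ℕ) (f : List (O × A) → β) : Prop :=
  ∀ h₁ h₂ : List (O × A), h₁.length = h₂.length →
    h₁.drop (h₁.length - k) = h₂.drop (h₂.length - k) → f h₁ = f h₂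

/-- The memory length of a history-dependent function: the least `k` such that it
depends only on the last `k` steps of history. -/
noncomputable def memLen {O A : Type*} {β : Type*} (f : List (O × A) → β) : ℕ :=
  sInf {k | CtxDep k f}

/-- A (stochastic, history-dependent) policy: a probability weight on each action. -/
def IsPolicy {O A : Type*} [Fintype A] (π : List (O × A) → O → A → ℝ) : Prop :=
  (∀ h o a, 0 ≤ π h o a) ∧ ∀ h o, ∑ a, π h o a = 1

/-- A (history-dependent) transition kernel: probability weights on next observations. -/
def IsKernel {O A : Type*} [Fintype O] (P : List (O × A) → O → A → O → ℝ) : Prop :=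
  (∀ h o a o', 0 ≤ P h o a o') ∧ ∀ h o a, ∑ o', P h o a o' = 1

/-- `nstep reward trans π γ n h o a` : the expected discounted sum of the next `n`
rewards after taking action `a` at the history `(h, o)` and thereafter following `π`. -/
noncomputable def nstep {O A : Type*} [Fintype O] [Fintype A]
    (reward : List (O × A) → O → A → ℝ)
    (trans : List (O × A) → O → A → O → ℝ)
    (π : List (O × A) → O → A → ℝ) (γ : ℝ) :
    ℕ → List (O × A) → O → A → ℝ
  | 0, _, _, _ => 0
  | n + 1, h, o, a =>
      reward h o a + γ * ∑ o' : O, trans h o a o' *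
        ∑ a' : A, π (h ++ [(o, a)]) o' a' * nstep reward trans π γ n (h ++ [(o, a)]) o' a'

/-- Full-history Q-value in the finite-horizon (`T`) POMDP: at history `(h, o)`
(i.e. at time `t = h.length + 1`) there are `T - h.length` remaining rewards. -/
noncomputable def Qfull {O A : Type*} [Fintype O] [Fintype A] (T : ℕ)
    (reward : List (O × A) → O → A → ℝ)
    (trans : List (O × A) → O → A → O → ℝ)
    (π : List (O × A) → O → A → ℝ) (γ : ℝ)
    (h : List (O × A)) (o : O) (a : A) : ℝ :=
  nstep reward trans π γ (T - h.length) h o a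

/-- Full-history state value of a policy. -/
noncomputable def Vfull {O A : Type*} [Fintype O] [Fintype A] (T : ℕ)
    (reward : List (O × A) → O → A → ℝ)
    (trans : List (O × A) → O → A → O → ℝ) (γ : ℝ)
    (π : List (O × A) → O → A → ℝ)
    (h : List (O × A)) (o : O) : ℝ :=
  ∑ a, π h o a * Qfull T reward trans π γ h o a

/-- An optimal policy: a policy whose value dominates that of every policy at every history. -/
def OptimalPolicy {O A : Type*} [Fintype O] [Fintype A] (T : ℕ)
    (reward : List (O × A) → O → A → ℝ)
    (trans : List (O × A) → O → A → O → ℝ) (γ : ℝ)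
    (π : List (O × A) → O → A → ℝ) : Prop :=
  IsPolicy π ∧ ∀ π', IsPolicy π' → ∀ h o,
    Vfull T reward trans γ π' h o ≤ Vfull T reward trans γ π h o

/-!
Policy improvement: acting greedily with respect to the Q-function of an optimal policy `π⋆`
is again optimal. The greedy policy is a function of that Q-function alone, so it depends on
no more history than the Q-function does; minimality of `l_mem(π⋆)` then gives
`l_mem(π⋆) ≤ l_mem(greedy) ≤ l_value(π⋆)`.
-/

section Memory

variable {O A β δ : Type*}

theorem CtxDep.comp {k : ℕ} {f : List (O × A) → β} (hf : CtxDep k f) (g : β → δ) :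
    CtxDep k (g ∘ f) :=
  fun h₁ h₂ hlen hdrop => congrArg g (hf h₁ h₂ hlen hdrop)

theorem memLen_comp_le {f : List (O × A) → β} (hf : ∃ k, CtxDep k f) (g : β → δ) :
    memLen (g ∘ f) ≤ memLen f :=
  Nat.sInf_le (CtxDep.comp (Nat.sInf_mem hf) g)

theorem memLen_eq_zero_of_isEmpty [IsEmpty A] (f : List (O × A) → β) : memLen f = 0 :=
  Nat.sInf_eq_zero.2 <| Or.inl fun h₁ h₂ _ _ => congrArg f (Subsingleton.elim h₁ h₂)

end Memory

section Policy

variable {O A : Type*} [Fintype A]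

theorem IsPolicy.sum_mul_le {π : List (O × A) → O → A → ℝ} (hπ : IsPolicy π)
    (h : List (O × A)) (o : O) {q : A → ℝ} {c : ℝ} (hq : ∀ a, q a ≤ c) :
    ∑ a, π h o a * q a ≤ c :=
  calc ∑ a, π h o a * q a ≤ ∑ a, π h o a * c :=
        sum_le_sum fun a _ => mul_le_mul_of_nonneg_left (hq a) (hπ.1 h o a)
    _ = c := by rw [← sum_mul, hπ.2 h o, one_mul]

open Classical in
noncomputable def detPolicy (σ : List (O × A) → O → A) : List (O × A) → O → A → ℝ :=
  fun h o a => if a = σ h o then 1 else 0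

theorem sum_detPolicy_mul (σ : List (O × A) → O → A) (h : List (O × A)) (o : O) (f : A → ℝ) :
    ∑ a, detPolicy σ h o a * f a = f (σ h o) := by
  classical
  simp [detPolicy]

theorem isPolicy_detPolicy (σ : List (O × A) → O → A) : IsPolicy (detPolicy σ) :=
  ⟨fun h o a => by unfold detPolicy; split_ifs <;> norm_num,
   fun h o => by simpa using sum_detPolicy_mul σ h o 1⟩

noncomputable def argmax [Nonempty A] {β : Type*} [LinearOrder β] (q : A → β) : A :=
  (Finite.exists_max q).choose

theorem le_argmax [Nonempty A] {β : Type*} [LinearOrder β] (q : A → β) (a : A) :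
    q a ≤ q (argmax q) :=
  (Finite.exists_max q).choose_spec a

end Policy

section Improvement

variable {O A : Type*} [Fintype O] [Fintype A] {T : ℕ}
  {reward : List (O × A) → O → A → ℝ} {trans : List (O × A) → O → A → O → ℝ}
  {π π' : List (O × A) → O → A → ℝ} {γ : ℝ}

theorem Qfull_eq_zero_of_le_length {h : List (O × A)} (hT : T ≤ h.length) (o : O) (a : A) :
    Qfull T reward trans π γ h o a = 0 := by
  rw [Qfull, Nat.sub_eq_zero_of_le hT, nstep]

/-- Beyond the horizon every Q-value vanishes, so only the last `T` steps can matter. -/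
theorem ctxDep_horizon_Qfull : CtxDep T (Qfull T reward trans π γ) := by
  intro h₁ h₂ hlen hdrop
  rcases lt_or_ge h₁.length T with hT | hT
  · rw [Nat.sub_eq_zero_of_le hT.le, Nat.sub_eq_zero_of_le (hlen ▸ hT).le,
      List.drop_zero, List.drop_zero] at hdrop
    rw [hdrop]
  · funext o a
    rw [Qfull_eq_zero_of_le_length hT, Qfull_eq_zero_of_le_length (hlen ▸ hT)]

theorem Qfull_of_length_lt {h : List (O × A)} (hT : h.length < T) (o : O) (a : A) :
    Qfull T reward trans π γ h o a = reward h o a +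
      γ * ∑ o', trans h o a o' * Vfull T reward trans γ π (h ++ [(o, a)]) o' := by
  obtain ⟨n, hn⟩ : ∃ n, T - h.length = n + 1 := ⟨T - h.length - 1, by omega⟩
  have hn' : T - (h ++ [(o, a)]).length = n := by simp; omega
  simp only [Qfull, Vfull, hn, hn', nstep]

theorem Qfull_le_Qfull_of_Vfull_le (hγ : 0 ≤ γ) (htrans : IsKernel trans)
    (h : List (O × A)) (o : O) (a : A)
    (hV : h.length < T → ∀ o', Vfull T reward trans γ π (h ++ [(o, a)]) o' ≤
      Vfull T reward trans γ π' (h ++ [(o, a)]) o') :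
    Qfull T reward trans π γ h o a ≤ Qfull T reward trans π' γ h o a := by
  rcases le_or_gt T h.length with hT | hT
  · rw [Qfull_eq_zero_of_le_length hT, Qfull_eq_zero_of_le_length hT]
  · rw [Qfull_of_length_lt hT, Qfull_of_length_lt hT]
    gcongr with o' _
    · exact htrans.1 h o a o'
    · exact hV hT o'

variable [Nonempty A]

theorem IsPolicy.Vfull_le_Qfull_argmax (hπ : IsPolicy π) (h : List (O × A)) (o : O) :
    Vfull T reward trans γ π h o ≤
      Qfull T reward trans π γ h o (argmax (Qfull T reward trans π γ h o)) :=
  hπ.sum_mul_le h o (le_argmax _)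

variable (T reward trans π γ) in
noncomputable def greedyPolicy : List (O × A) → O → A → ℝ :=
  detPolicy fun h o => argmax (Qfull T reward trans π γ h o)

theorem Vfull_le_Vfull_greedyPolicy (hγ : 0 ≤ γ) (htrans : IsKernel trans) (hπ : IsPolicy π)
    (h : List (O × A)) (o : O) :
    Vfull T reward trans γ π h o ≤
      Vfull T reward trans γ (greedyPolicy T reward trans π γ) h o := by
  set a := argmax (Qfull T reward trans π γ h o)
  calc Vfull T reward trans γ π h o ≤ Qfull T reward trans π γ h o a :=
        hπ.Vfull_le_Qfull_argmax h o
    _ ≤ Qfull T reward trans (greedyPolicy T reward trans π γ) γ h o a :=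
        Qfull_le_Qfull_of_Vfull_le hγ htrans h o a fun _ o' =>
          Vfull_le_Vfull_greedyPolicy hγ htrans hπ (h ++ [(o, a)]) o'
    _ = Vfull T reward trans γ (greedyPolicy T reward trans π γ) h o :=
        (sum_detPolicy_mul (fun h o => argmax (Qfull T reward trans π γ h o)) h o _).symm
termination_by T - h.length
decreasing_by simp; omega

theorem OptimalPolicy.greedyPolicy (hγ : 0 ≤ γ) (htrans : IsKernel trans)
    (hopt : OptimalPolicy T reward trans γ π) :
    OptimalPolicy T reward trans γ (greedyPolicy T reward trans π γ) :=
  ⟨isPolicy_detPolicy _, fun π' hπ' h o =>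
    (hopt.2 π' hπ' h o).trans (Vfull_le_Vfull_greedyPolicy hγ htrans hopt.1 h o)⟩

theorem memLen_greedyPolicy_le :
    memLen (greedyPolicy T reward trans π γ) ≤ memLen (Qfull T reward trans π γ) :=
  memLen_comp_le ⟨T, ctxDep_horizon_Qfull⟩ fun q => detPolicy (fun _ o => argmax (q o)) []

end Improvement

theorem policy_memory_le_value_memory_general
    {O A : Type*} [Fintype O] [Fintype A] (T : ℕ) (γ : ℝ)
    (reward : List (O × A) → O → A → ℝ)
    (trans : List (O × A) → O → A → O → ℝ)
    (πs : List (O × A) → O → A → ℝ)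
    (hγ0 : 0 ≤ γ) (htrans : IsKernel trans)
    (hopt : OptimalPolicy T reward trans γ πs)
    (hmin : ∀ π', OptimalPolicy T reward trans γ π' → memLen πs ≤ memLen π') :
    memLen πs ≤ memLen (fun h => fun o a => Qfull T reward trans πs γ h o a) := by
  rcases isEmpty_or_nonempty A with hA | hA
  · exact (memLen_eq_zero_of_isEmpty πs).trans_le (Nat.zero_le _)
  · calc memLen πs ≤ memLen (greedyPolicy T reward trans πs γ) :=
          hmin _ (hopt.greedyPolicy hγ0 htrans)
      _ ≤ memLen (Qfull T reward trans πs γ) := memLen_greedyPolicy_le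

/-- among all optimal policies of a POMDP, any optimal policy `π⋆` with
minimal policy memory length satisfies `l_mem(π⋆) ≤ l_value(π⋆)`. -/
theorem policy_memory_le_value_memory
    {O A : Type*} [Fintype O] [Fintype A] (T : ℕ) (γ : ℝ)
    (reward : List (O × A) → O → A → ℝ)
    (trans : List (O × A) → O → A → O → ℝ)
    (πs : List (O × A) → O → A → ℝ)
    (hγ0 : 0 ≤ γ) (hγ1 : γ ≤ 1) (htrans : IsKernel trans)
    (hopt : OptimalPolicy T reward trans γ πs)
    (hmin : ∀ π', OptimalPolicy T reward trans γ π' → memLen πs ≤ memLen π') :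
    memLen πs ≤ memLen (fun h => fun o a => Qfull T reward trans πs γ h o a) :=
  policy_memory_le_value_memory_general T γ reward trans πs hγ0 htrans hopt hmin
end

section
/- The credit assignment length of an optimal policy is not uniquely determined by the task: there exists a finite MDP with two optimal deterministic policies π*_1 and π*_2 such that c(π*_1) = 3 and c(π*_2) = 2. -/
open Finset

/-- Deterministic trajectory of a deterministic policy. -/
def trajD {S A : Type*} (f : S → A → S) (π : S → A) (s0 : S) : ℕ → S
  | 0 => s0
  | k + 1 => f (trajD f π s0 k) (π (trajD f π s0 k))

/-- Total reward of `π` over `n` steps from `s` in a deterministic MDP. -/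
def valD {S A : Type*} (f : S → A → S) (r : S → A → ℝ) (π : S → A) : ℕ → S → ℝ
  | 0, _ => 0
  | n + 1, s => r s (π s) + valD f r π n (f s (π s))

/-- `n`-step action value: take `a` at `s`, then follow `π` for the remaining steps. -/
def QD {S A : Type*} (f : S → A → S) (r : S → A → ℝ) (π : S → A) : ℕ → S → A → ℝ
  | 0, _, _ => 0
  | n + 1, s, a => r s a + valD f r π n (f s a)

/-- Credit assignment length of a state `s` with `m` remaining steps under `π`. -/
noncomputable def cLen {S A : Type*} (f : S → A → S) (r : S → A → ℝ) (π : S → A)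
    (m : ℕ) (s : S) : ℕ :=
  sInf {n | 1 ≤ n ∧ n ≤ m ∧
    ∃ a ∈ {a : A | ∀ a', QD f r π m s a' ≤ QD f r π m s a},
      ∀ a' ∉ {a : A | ∀ a', QD f r π m s a' ≤ QD f r π m s a},
        QD f r π n s a' < QD f r π n s a}

/-- Credit assignment length of a policy: worst case over the states it visits. -/
noncomputable def cPol {S A : Type*} (f : S → A → S) (r : S → A → ℝ) (π : S → A)
    (T : ℕ) (s0 : S) : ℕ :=
  (Finset.range T).sup fun k => cLen f r π (T - k) (trajD f π s0 k)

/-! ### Auxiliary construction: a concrete 7-state, 2-action deterministic MDP -/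

/-- Transition function of the example MDP (states `0..6` stand for `P1..P7`,
`false` is action `x`, `true` is action `y`). -/
def fM : Fin 7 → Bool → Fin 7 := fun s a =>
  if s = 0 then (if a then 1 else 0)
  else if s = 1 then (if a then 4 else 2)
  else if s = 2 then 3
  else if s = 3 then 6
  else if s = 4 then 5
  else if s = 5 then 6
  else 6

/-- Reward function of the example MDP (reward upon entering the next state). -/
noncomputable def rM : Fin 7 → Bool → ℝ := fun s a =>
  if s = 0 then 0
  else if s = 1 then (if a then 1 else -1)
  else if s = 2 then 1
  else if s = 3 then 5
  else if s = 4 then -1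
  else if s = 5 then 5
  else 0

/-- Optimal policy 1: `y` at `P1`, `x` at `P2`. -/
def pi1 : Fin 7 → Bool := fun s => decide (s ≠ 1)

/-- Optimal policy 2: `y` everywhere. -/
def pi2 : Fin 7 → Bool := fun _ => true

lemma cLen_le_m {S A : Type*} (f : S → A → S) (r : S → A → ℝ) (π : S → A)
    (m : ℕ) (s : S) : cLen f r π m s ≤ m := by
  unfold cLen
  rcases Set.eq_empty_or_nonempty {n | 1 ≤ n ∧ n ≤ m ∧
    ∃ a ∈ {a : A | ∀ a', QD f r π m s a' ≤ QD f r π m s a},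
      ∀ a' ∉ {a : A | ∀ a', QD f r π m s a' ≤ QD f r π m s a},
        QD f r π n s a' < QD f r π n s a} with h | h
  · rw [h]; simp
  · obtain ⟨n, hn⟩ := h
    exact le_trans (Nat.sInf_le hn) hn.2.1

/-- At a state where the two actions have equal `m`-step `Q`-values,
the credit assignment length is at most 1 (the greedy set is everything). -/
lemma cLen_le_one_of_tie {S A : Type*} {f : S → A → S} {r : S → A → ℝ}
    {π : S → A} {m : ℕ} {s : S} (a0 : A) (hm : 1 ≤ m)
    (h : ∀ a, QD f r π m s a = QD f r π m s a0) :
    cLen f r π m s ≤ 1 := by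
  unfold cLen
  apply Nat.sInf_le
  refine ⟨le_refl 1, hm, a0, ?_, ?_⟩
  · intro a'; rw [h a']
  · intro a' ha'
    exact absurd (fun a'' => (h a'').le.trans (h a').ge) ha'

lemma cLen_pi1 : cLen fM rM pi1 4 0 = 3 := by
  have hgf : (false : Bool) ∉ {a : Bool | ∀ a', QD fM rM pi1 4 0 a' ≤ QD fM rM pi1 4 0 a} := by
    intro hf
    have hle := hf true
    simp [QD, valD, fM, rM, pi1] at hle
    norm_num at hle
  have hgt : (true : Bool) ∈ {a : Bool | ∀ a', QD fM rM pi1 4 0 a' ≤ QD fM rM pi1 4 0 a} := by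
    intro a'
    cases a' with
    | false => simp [QD, valD, fM, rM, pi1]
    | true => exact le_refl _
  have h3 : (3 : ℕ) ∈ {n | 1 ≤ n ∧ n ≤ 4 ∧
      ∃ a ∈ {a : Bool | ∀ a', QD fM rM pi1 4 0 a' ≤ QD fM rM pi1 4 0 a},
        ∀ a' ∉ {a : Bool | ∀ a', QD fM rM pi1 4 0 a' ≤ QD fM rM pi1 4 0 a},
          QD fM rM pi1 n 0 a' < QD fM rM pi1 n 0 a} := by
    refine ⟨by norm_num, by norm_num, true, hgt, ?_⟩
    intro a' ha'
    cases a' with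
    | true => exact absurd hgt ha'
    | false => simp [QD, valD, fM, rM, pi1]
  unfold cLen
  apply le_antisymm (Nat.sInf_le h3)
  apply le_csInf ⟨3, h3⟩
  rintro n ⟨hn1, hn4, a, ha, hlt⟩
  cases a with
  | false => exact absurd ha hgf
  | true =>
    by_contra hc
    push_neg at hc
    have hfalse := hlt false hgf
    interval_cases n
    · simp [QD, valD, fM, rM, pi1] at hfalse
    · simp [QD, valD, fM, rM, pi1] at hfalse
      norm_num at hfalse

lemma cLen_pi2 : cLen fM rM pi2 4 0 = 2 := by
  have hgf : (false : Bool) ∉ {a : Bool | ∀ a', QD fM rM pi2 4 0 a' ≤ QD fM rM pi2 4 0 a} := by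
    intro hf
    have hle := hf true
    simp [QD, valD, fM, rM, pi2] at hle
    norm_num at hle
  have hgt : (true : Bool) ∈ {a : Bool | ∀ a', QD fM rM pi2 4 0 a' ≤ QD fM rM pi2 4 0 a} := by
    intro a'
    cases a' with
    | false => simp [QD, valD, fM, rM, pi2]
    | true => exact le_refl _
  have h2 : (2 : ℕ) ∈ {n | 1 ≤ n ∧ n ≤ 4 ∧
      ∃ a ∈ {a : Bool | ∀ a', QD fM rM pi2 4 0 a' ≤ QD fM rM pi2 4 0 a},
        ∀ a' ∉ {a : Bool | ∀ a', QD fM rM pi2 4 0 a' ≤ QD fM rM pi2 4 0 a},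
          QD fM rM pi2 n 0 a' < QD fM rM pi2 n 0 a} := by
    refine ⟨by norm_num, by norm_num, true, hgt, ?_⟩
    intro a' ha'
    cases a' with
    | true => exact absurd hgt ha'
    | false => simp [QD, valD, fM, rM, pi2]
  unfold cLen
  apply le_antisymm (Nat.sInf_le h2)
  apply le_csInf ⟨2, h2⟩
  rintro n ⟨hn1, hn4, a, ha, hlt⟩
  cases a with
  | false => exact absurd ha hgf
  | true =>
    by_contra hc
    push_neg at hc
    have hfalse := hlt false hgf
    interval_cases n
    simp [QD, valD, fM, rM, pi2] at hfalse

/-- the credit assignment length of an optimal policy is not uniquely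
determined by the task: some finite deterministic MDP has two optimal deterministic
policies `π1, π2` with `c(π1) = 3` and `c(π2) = 2`. -/
theorem credit_assignment_length_not_unique :
    ∃ (S A : Type) (_ : Fintype S) (_ : Fintype A)
      (f : S → A → S) (r : S → A → ℝ) (T : ℕ) (s0 : S) (π1 π2 : S → A),
      4 ≤ T ∧ π1 ≠ π2 ∧
      (∀ π : S → A, valD f r π T s0 ≤ valD f r π1 T s0) ∧
      (∀ π : S → A, valD f r π T s0 ≤ valD f r π2 T s0) ∧
      cPol f r π1 T s0 = 3 ∧ cPol f r π2 T s0 = 2 := by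
  refine ⟨Fin 7, Bool, inferInstance, inferInstance, fM, rM, 4, 0, pi1, pi2,
    le_refl 4, ?_, ?_, ?_, ?_, ?_⟩
  · intro h
    have := congrFun h 1
    simp [pi1, pi2] at this
  · intro π
    have h1 : valD fM rM pi1 4 0 = 5 := by simp [valD, fM, rM, pi1]
    rw [h1]
    cases h0 : π 0 <;> cases h1 : π 1 <;> cases h2 : π 2 <;> cases h3 : π 3 <;> cases h4 : π 4 <;>
      simp [valD, fM, rM, h0, h1, h2, h3, h4]
  · intro π
    have h2 : valD fM rM pi2 4 0 = 5 := by simp [valD, fM, rM, pi2]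
    rw [h2]
    cases h0 : π 0 <;> cases h1 : π 1 <;> cases h2 : π 2 <;> cases h3 : π 3 <;> cases h4 : π 4 <;>
      simp [valD, fM, rM, h0, h1, h2, h3, h4]
  · -- cPol pi1 = 3
    unfold cPol
    have htraj0 : trajD fM pi1 0 0 = 0 := rfl
    apply le_antisymm
    · apply Finset.sup_le
      intro k hk
      simp only [Finset.mem_range] at hk
      interval_cases k
      · rw [htraj0]; exact le_of_eq cLen_pi1
      · exact le_trans (cLen_le_m _ _ _ _ _) (by norm_num)
      · exact le_trans (cLen_le_m _ _ _ _ _) (by norm_num)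
      · exact le_trans (cLen_le_m _ _ _ _ _) (by norm_num)
    · have := Finset.le_sup (f := fun k => cLen fM rM pi1 (4 - k) (trajD fM pi1 0 k))
        (Finset.mem_range.mpr (by norm_num : (0:ℕ) < 4))
      simp only [htraj0] at this
      simpa [cLen_pi1] using this
  · -- cPol pi2 = 2
    unfold cPol
    have htraj0 : trajD fM pi2 0 0 = 0 := rfl
    have htraj1 : trajD fM pi2 0 1 = 1 := by simp [trajD, fM, pi2]
    apply le_antisymm
    · apply Finset.sup_le
      intro k hk
      simp only [Finset.mem_range] at hk
      interval_cases k
      · rw [htraj0]; exact le_of_eq cLen_pi2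
      · rw [htraj1]
        refine le_trans (cLen_le_one_of_tie true (by norm_num) ?_) (by norm_num)
        intro a
        cases a with
        | true => rfl
        | false => simp [QD, valD, fM, rM, pi2]
      · exact le_trans (cLen_le_m _ _ _ _ _) (by norm_num)
      · exact le_trans (cLen_le_m _ _ _ _ _) (by norm_num)
    · have := Finset.le_sup (f := fun k => cLen fM rM pi2 (4 - k) (trajD fM pi2 0 k))
        (Finset.mem_range.mpr (by norm_num : (0:ℕ) < 4))
      simp only [htraj0] at this
      simpa [cLen_pi2] using this
end

section
/- In the Passive T-Maze with horizon T, the unique optimal policy (moving right for T−1 steps then turning toward the goal) achieves expected return 1, while every Markovian (memoryless, context length 1) policy achieves expected return at most 1/2. -/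
open Finset

/-- A T-Maze state: a grid position (horizontal, vertical) and the goal identity
(`true` = upper goal G1, `false` = lower goal G2). -/
abbrev TState : Type := (ℤ × ℤ) × Bool

/-- Observations in the T-Maze. -/
inductive TObs : Type
  | oracle (g : Bool)   -- at the oracle cell the goal is revealed
  | junction
  | goalObs (g : Bool)
  | corridor
  deriving DecidableEq

/-- The four actions: 0 = Left, 1 = Right, 2 = Up, 3 = Down. -/
def dir : Fin 4 → ℤ × ℤ := ![(-1, 0), (1, 0), (0, 1), (0, -1)]

/-- Valid cells: a corridor from `x = x0` to the junction `(L, 0)`, plus the two goal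
cells `(L, 1)` and `(L, -1)`. -/
def validP (x0 L : ℤ) (p : ℤ × ℤ) : Prop :=
  (x0 ≤ p.1 ∧ p.1 ≤ L ∧ p.2 = 0) ∨ (p.1 = L ∧ (p.2 = 1 ∨ p.2 = -1))

instance (x0 L : ℤ) (p : ℤ × ℤ) : Decidable (validP x0 L p) := by
  unfold validP; infer_instance

/-- Deterministic transition: move in the chosen direction, staying in place at walls. -/
def stepP (x0 L : ℤ) (s : TState) (a : Fin 4) : TState :=
  if validP x0 L (s.1 + dir a) then (s.1 + dir a, s.2) else s

/-- The cell of the sampled goal. -/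
def goalCell (L : ℤ) (g : Bool) : ℤ × ℤ := (L, if g then 1 else -1)

/-- Observation function of the Passive T-Maze (oracle = start at `(0,0)`). -/
def obsP (L : ℤ) (s : TState) : TObs :=
  if s.1 = (0, 0) then .oracle s.2
  else if s.1 = (L, 0) then .junction
  else if s.1 = (L, 1) then .goalObs true
  else if s.1 = (L, -1) then .goalObs false
  else .corridor

/-- Reward `R_t` of the Passive T-Maze (horizon `T`, corridor length `L = T - 1`):
`R_t = (1[x_{t+1} ≥ t] - 1)/(T-1)` for `t ≤ T - 1`, and `R_T = 1[o_{T+1} = G]`. -/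
noncomputable def rewP (T : ℕ) (t : ℕ) (s : TState) (a : Fin 4) : ℝ :=
  let L : ℤ := (T : ℤ) - 1
  let s' := stepP 0 L s a
  if t < T then ((if (t : ℤ) ≤ s'.1.1 then (1 : ℝ) else 0) - 1) / ((T : ℝ) - 1)
  else if s'.1 = goalCell L s.2 then 1 else 0

/-- Expected return of a (stochastic) Markovian policy from time `t`, over `n` steps. -/
noncomputable def mRetP (T : ℕ) (π : TObs → Fin 4 → ℝ) : ℕ → ℕ → TState → ℝ
  | 0, _, _ => 0
  | n + 1, t, s => ∑ a, π (obsP ((T : ℤ) - 1) s) a *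
      (rewP T t s a + mRetP T π n (t + 1) (stepP 0 ((T : ℤ) - 1) s a))

/-- Return of a deterministic open-loop plan from time `t`, over `n` steps. -/
noncomputable def dRetP (T : ℕ) (plan : ℕ → Fin 4) : ℕ → ℕ → TState → ℝ
  | 0, _, _ => 0
  | n + 1, t, s => rewP T t s (plan t) + dRetP T plan n (t + 1) (stepP 0 ((T : ℤ) - 1) s (plan t))

/-- The unique optimal behaviour: move Right for `T - 1` steps, then toward the goal. -/
def optPlan (T : ℕ) (g : Bool) (t : ℕ) : Fin 4 :=
  if t < T then 1 else if g then 2 else 3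

-- AUX
lemma stepP_snd (x0 L : ℤ) (s : TState) (a : Fin 4) : (stepP x0 L s a).2 = s.2 := by
  unfold stepP; split <;> rfl

lemma stepP_x_le (x0 L : ℤ) (s : TState) (a : Fin 4) : (stepP x0 L s a).1.1 ≤ s.1.1 + 1 := by
  unfold stepP; split
  · fin_cases a <;> simp [dir] <;> omega
  · omega

lemma stepP_valid (x0 L : ℤ) (s : TState) (a : Fin 4) (h : validP x0 L s.1) :
    validP x0 L (stepP x0 L s a).1 := by
  unfold stepP; split
  · assumption
  · exact h

lemma no_goal (T : ℕ) (hT : 2 ≤ T) (s : TState) (a : Fin 4)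
    (hv : validP 0 ((T : ℤ) - 1) s.1) (hx : s.1.1 ≤ (T : ℤ) - 2) :
    (stepP 0 ((T : ℤ) - 1) s a).1 ≠ goalCell ((T : ℤ) - 1) s.2 := by
  have hT' : (2 : ℤ) ≤ (T : ℤ) := by exact_mod_cast hT
  have hy : s.1.2 = 0 := by
    rcases hv with ⟨_, _, h⟩ | ⟨h, _⟩
    · exact h
    · omega
  obtain ⟨⟨x, y⟩, g⟩ := s
  simp only at hy hx
  subst hy
  unfold stepP; split
  · intro h
    have h1 := congrArg Prod.fst h
    have h2 := congrArg Prod.snd h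
    cases g <;> fin_cases a <;>
      simp [dir, goalCell] at h1 h2 ⊢ <;> omega
  · intro h
    have h1 := congrArg Prod.fst h
    simp [goalCell] at h1
    omega

lemma behind_nonpos (T : ℕ) (hT : 2 ≤ T) (π : TObs → Fin 4 → ℝ)
    (hπ0 : ∀ o a, 0 ≤ π o a) :
    ∀ n t (s : TState), t + n = T + 1 → validP 0 ((T : ℤ) - 1) s.1 →
      s.1.1 ≤ (t : ℤ) - 2 → mRetP T π n t s ≤ 0 := by
  intro n
  induction n with
  | zero => intro t s _ _ _; simp [mRetP]
  | succ n ih =>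
    intro t s ht hv hx
    have hT' : (2 : ℤ) ≤ (T : ℤ) := by exact_mod_cast hT
    have hTR : (1 : ℝ) ≤ (T : ℝ) - 1 := by
      have : (2 : ℝ) ≤ (T : ℝ) := by exact_mod_cast hT
      linarith
    rw [mRetP]
    apply Finset.sum_nonpos
    intro a _
    apply mul_nonpos_of_nonneg_of_nonpos (hπ0 _ _)
    have hx' : (stepP 0 ((T : ℤ) - 1) s a).1.1 ≤ (t : ℤ) - 1 :=
      le_trans (stepP_x_le _ _ _ _) (by omega)
    have hrew : rewP T t s a ≤ 0 := by
      unfold rewP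
      simp only
      split
      · rw [if_neg (by omega)]
        apply div_nonpos_of_nonpos_of_nonneg <;> linarith
      · rw [if_neg (no_goal T hT s a hv (by omega))]
    have hcont : mRetP T π n (t + 1) (stepP 0 ((T : ℤ) - 1) s a) ≤ 0 := by
      apply ih (t + 1) _ (by omega) (stepP_valid _ _ _ _ hv)
      push_cast
      omega
    linarith

lemma step_move (x0 L : ℤ) (p q : ℤ × ℤ) (g : Bool) (a : Fin 4)
    (h : p + dir a = q) (hv : validP x0 L q) : stepP x0 L (p, g) a = (q, g) := by
  unfold stepP; rw [show ((p,g) : TState).1 + dir a = q from h, if_pos hv]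

lemma step_stay (x0 L : ℤ) (p : ℤ × ℤ) (g : Bool) (a : Fin 4)
    (h : ¬ validP x0 L (p + dir a)) : stepP x0 L (p, g) a = (p, g) := by
  unfold stepP; rw [if_neg h]

lemma dir0 : dir 0 = (-1, 0) := rfl
lemma dir1 : dir 1 = (1, 0) := rfl
lemma dir2 : dir 2 = (0, 1) := rfl
lemma dir3 : dir 3 = (0, -1) := rfl

lemma obs_junction (T : ℕ) (hT : 2 ≤ T) (g : Bool) :
    obsP ((T:ℤ) - 1) ((((T:ℤ) - 1), 0), g) = .junction := by
  have hT' : (2 : ℤ) ≤ (T : ℤ) := by exact_mod_cast hT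
  unfold obsP
  rw [if_neg (by simp [Prod.ext_iff]; try omega), if_pos rfl]

lemma obs_corridor (T : ℕ) (x : ℤ) (g : Bool) (h1 : 1 ≤ x) (h2 : x ≤ (T:ℤ) - 2) :
    obsP ((T:ℤ) - 1) ((x, 0), g) = .corridor := by
  unfold obsP
  rw [if_neg (by simp [Prod.ext_iff]; try omega), if_neg (by simp [Prod.ext_iff]; try omega),
    if_neg (by simp [Prod.ext_iff]; try omega), if_neg (by simp [Prod.ext_iff]; try omega)]

lemma obs_oracle (L : ℤ) (g : Bool) : obsP L (((0:ℤ), (0:ℤ)), g) = .oracle g := by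
  unfold obsP; rw [if_pos rfl]

lemma rew_corridor_nonpos (T t : ℕ) (hT : 2 ≤ T) (s : TState) (a : Fin 4) (h : t < T) :
    rewP T t s a ≤ 0 := by
  have : (1:ℝ) ≤ (T:ℝ) - 1 := by
    have : (2:ℝ) ≤ (T:ℝ) := by exact_mod_cast hT
    linarith
  unfold rewP; simp only
  rw [if_pos h]
  apply div_nonpos_of_nonpos_of_nonneg
  · split <;> norm_num
  · linarith

lemma rew_corridor_zero (T t : ℕ) (hT : 2 ≤ T) (s : TState) (a : Fin 4) (h : t < T)
    (hx : (t:ℤ) ≤ (stepP 0 ((T:ℤ)-1) s a).1.1) : rewP T t s a = 0 := by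
  have : (1:ℝ) ≤ (T:ℝ) - 1 := by
    have : (2:ℝ) ≤ (T:ℝ) := by exact_mod_cast hT
    linarith
  unfold rewP; simp only
  rw [if_pos h, if_pos hx]
  norm_num

lemma rew_final (T t : ℕ) (s : TState) (a : Fin 4) (h : ¬ t < T) :
    rewP T t s a = if (stepP 0 ((T:ℤ)-1) s a).1 = goalCell ((T:ℤ)-1) s.2 then 1 else 0 := by
  unfold rewP; simp only
  rw [if_neg h]

lemma pair_bound (T : ℕ) (hT : 2 ≤ T) (π : TObs → Fin 4 → ℝ)
    (hπ0 : ∀ o a, 0 ≤ π o a) (hπ1 : ∀ o, ∑ a, π o a = 1) :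
    ∀ n t, 2 ≤ t → t + n = T + 1 →
      max (mRetP T π n t (((t:ℤ) - 1, 0), true)) 0 +
        max (mRetP T π n t (((t:ℤ) - 1, 0), false)) 0 ≤ 1 := by
  intro n
  induction n with
  | zero => intro t _ _; simp [mRetP]
  | succ n ih =>
    intro t ht2 htn
    have hT' : (2 : ℤ) ≤ (T : ℤ) := by exact_mod_cast hT
    rcases Nat.eq_zero_or_pos n with hn | hn
    · -- n = 0, t = T : at the junction
      subst hn
      have htT : t = T := by omega
      have hnt : ¬ t < T := by omega
      have key : ∀ g : Bool, mRetP T π 1 t (((t:ℤ) - 1, 0), g)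
          = π .junction (if g then 2 else 3) := by
        intro g
        have hL : ((t:ℤ) - 1) = ((T:ℤ) - 1) := by rw [htT]
        have e0 : stepP 0 ((T:ℤ)-1) ((((T:ℤ)-1), 0), g) 0 = ((((T:ℤ)-2), 0), g) :=
          step_move _ _ _ _ _ _ (by rw [dir0, Prod.mk_add_mk]; simp [Prod.ext_iff]; try omega)
            (by simp [validP]; try omega)
        have e1 : stepP 0 ((T:ℤ)-1) ((((T:ℤ)-1), 0), g) 1 = ((((T:ℤ)-1), 0), g) :=
          step_stay _ _ _ _ _ (by rw [dir1, Prod.mk_add_mk]; simp [validP]; try omega)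
        have e2 : stepP 0 ((T:ℤ)-1) ((((T:ℤ)-1), 0), g) 2 = ((((T:ℤ)-1), 1), g) :=
          step_move _ _ _ _ _ _ (by rw [dir2, Prod.mk_add_mk]; simp [Prod.ext_iff]; try omega)
            (by simp [validP])
        have e3 : stepP 0 ((T:ℤ)-1) ((((T:ℤ)-1), 0), g) 3 = ((((T:ℤ)-1), -1), g) :=
          step_move _ _ _ _ _ _ (by rw [dir3, Prod.mk_add_mk]; simp [Prod.ext_iff]; try omega)
            (by simp [validP])
        rw [mRetP, Fin.sum_univ_four, hL, obs_junction T hT,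
          rew_final T t _ _ hnt, rew_final T t _ _ hnt, rew_final T t _ _ hnt,
          rew_final T t _ _ hnt, e0, e1, e2, e3]
        simp only [mRetP]
        have gcT : goalCell ((T:ℤ)-1) true = (((T:ℤ)-1), 1) := rfl
        have gcF : goalCell ((T:ℤ)-1) false = (((T:ℤ)-1), -1) := rfl
        cases g
        · rw [if_neg (by simp [gcF, Prod.ext_iff]; try omega),
            if_neg (by simp [gcF, Prod.ext_iff]; try omega),
            if_neg (by simp [gcF, Prod.ext_iff]; try omega),
            if_pos (by simp [gcF, Prod.ext_iff])]
          simp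
        · rw [if_neg (by simp [gcT, Prod.ext_iff]; try omega),
            if_neg (by simp [gcT, Prod.ext_iff]; try omega),
            if_pos (by simp [gcT, Prod.ext_iff]),
            if_neg (by simp [gcT, Prod.ext_iff]; try omega)]
          simp
      rw [key true, key false]
      have h2 := hπ0 TObs.junction 2
      have h3 := hπ0 TObs.junction 3
      have h0 := hπ0 TObs.junction 0
      have h1 := hπ0 TObs.junction 1
      have hsum := hπ1 TObs.junction
      rw [Fin.sum_univ_four] at hsum
      simp only [if_true, Bool.false_eq_true, if_false]
      rw [max_eq_left h2, max_eq_left h3]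
      linarith
    · -- corridor case : t < T
      have htT : t < T := by omega
      have hobs : obsP ((T:ℤ)-1) (((t:ℤ) - 1, 0), true) = .corridor :=
        obs_corridor T _ _ (by omega) (by omega)
      have hobsF : obsP ((T:ℤ)-1) (((t:ℤ) - 1, 0), false) = .corridor :=
        obs_corridor T _ _ (by omega) (by omega)
      have key : ∀ g : Bool, mRetP T π (n + 1) t (((t:ℤ) - 1, 0), g) ≤
          π .corridor 1 * mRetP T π n (t + 1) (((t:ℤ), 0), g) := by
        intro g
        have e0 : stepP 0 ((T:ℤ)-1) (((t:ℤ)-1, 0), g) 0 = (((t:ℤ)-2, 0), g) :=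
          step_move _ _ _ _ _ _ (by rw [dir0, Prod.mk_add_mk]; simp [Prod.ext_iff]; try omega)
            (by simp [validP]; try omega)
        have e1 : stepP 0 ((T:ℤ)-1) (((t:ℤ)-1, 0), g) 1 = (((t:ℤ), 0), g) :=
          step_move _ _ _ _ _ _ (by rw [dir1, Prod.mk_add_mk]; simp [Prod.ext_iff]; try omega)
            (by simp [validP]; try omega)
        have e2 : stepP 0 ((T:ℤ)-1) (((t:ℤ)-1, 0), g) 2 = (((t:ℤ)-1, 0), g) :=
          step_stay _ _ _ _ _ (by rw [dir2, Prod.mk_add_mk]; simp [validP]; try omega)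
        have e3 : stepP 0 ((T:ℤ)-1) (((t:ℤ)-1, 0), g) 3 = (((t:ℤ)-1, 0), g) :=
          step_stay _ _ _ _ _ (by rw [dir3, Prod.mk_add_mk]; simp [validP]; try omega)
        have hvalid : validP 0 ((T:ℤ)-1) ((((t:ℤ)-1, 0), g) : TState).1 := by
          simp [validP]; try omega
        have r1 : rewP T t (((t:ℤ)-1, 0), g) 1 = 0 :=
          rew_corridor_zero T t hT _ _ htT (by rw [e1]; try simp; try omega)
        have r0 : rewP T t (((t:ℤ)-1, 0), g) 0 ≤ 0 := rew_corridor_nonpos T t hT _ _ htT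
        have r2 : rewP T t (((t:ℤ)-1, 0), g) 2 ≤ 0 := rew_corridor_nonpos T t hT _ _ htT
        have r3 : rewP T t (((t:ℤ)-1, 0), g) 3 ≤ 0 := rew_corridor_nonpos T t hT _ _ htT
        have v0 : mRetP T π n (t+1) (((t:ℤ)-2, 0), g) ≤ 0 :=
          behind_nonpos T hT π hπ0 n (t+1) _ (by omega) (by simp [validP]; try omega)
            (by try push_cast; try simp; try omega)
        have v2 : mRetP T π n (t+1) (((t:ℤ)-1, 0), g) ≤ 0 :=
          behind_nonpos T hT π hπ0 n (t+1) _ (by omega) (by simp [validP]; try omega)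
            (by try push_cast; try simp; try omega)
        have hp0 := hπ0 TObs.corridor 0
        have hp1 := hπ0 TObs.corridor 1
        have hp2 := hπ0 TObs.corridor 2
        have hp3 := hπ0 TObs.corridor 3
        rw [mRetP, Fin.sum_univ_four]
        cases g
        · rw [hobsF, e0, e1, e2, e3, r1]
          nlinarith [mul_nonpos_of_nonneg_of_nonpos hp0 (add_nonpos r0 v0),
            mul_nonpos_of_nonneg_of_nonpos hp2 (add_nonpos r2 v2),
            mul_nonpos_of_nonneg_of_nonpos hp3 (add_nonpos r3 v2)]
        · rw [hobs, e0, e1, e2, e3, r1]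
          nlinarith [mul_nonpos_of_nonneg_of_nonpos hp0 (add_nonpos r0 v0),
            mul_nonpos_of_nonneg_of_nonpos hp2 (add_nonpos r2 v2),
            mul_nonpos_of_nonneg_of_nonpos hp3 (add_nonpos r3 v2)]
      have hπc1 : π .corridor 1 ≤ 1 := by
        have hsum := hπ1 TObs.corridor
        rw [Fin.sum_univ_four] at hsum
        have := hπ0 TObs.corridor 0
        have := hπ0 TObs.corridor 2
        have := hπ0 TObs.corridor 3
        linarith
      have hπc0 : 0 ≤ π .corridor 1 := hπ0 _ _
      have ihr := ih (t + 1) (by omega) (by omega)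
      have hc : ((t + 1 : ℕ) : ℤ) - 1 = (t : ℤ) := by push_cast; ring
      rw [hc] at ihr
      calc max (mRetP T π (n+1) t (((t:ℤ) - 1, 0), true)) 0 +
            max (mRetP T π (n+1) t (((t:ℤ) - 1, 0), false)) 0
          ≤ π .corridor 1 * max (mRetP T π n (t+1) (((t:ℤ), 0), true)) 0 +
            π .corridor 1 * max (mRetP T π n (t+1) (((t:ℤ), 0), false)) 0 := by
            have hb : ∀ g : Bool, max (mRetP T π (n+1) t (((t:ℤ) - 1, 0), g)) 0 ≤
                π .corridor 1 * max (mRetP T π n (t+1) (((t:ℤ), 0), g)) 0 := by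
              intro g
              apply max_le
              · exact le_trans (key g)
                  (mul_le_mul_of_nonneg_left (le_max_left _ _) hπc0)
              · positivity
            exact add_le_add (hb true) (hb false)
        _ = π .corridor 1 * (max (mRetP T π n (t+1) (((t:ℤ), 0), true)) 0 +
            max (mRetP T π n (t+1) (((t:ℤ), 0), false)) 0) := by ring
        _ ≤ 1 := mul_le_one₀ hπc1 (by positivity) ihr

lemma opt_ret (T : ℕ) (hT : 2 ≤ T) (g : Bool) :
    ∀ n t, 1 ≤ t → t + n = T + 1 → 1 ≤ n →
      dRetP T (optPlan T g) n t (((t:ℤ) - 1, 0), g) = 1 := by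
  intro n
  induction n with
  | zero => intro t _ _ h; omega
  | succ n ih =>
    intro t ht1 htn _
    have hT' : (2 : ℤ) ≤ (T : ℤ) := by exact_mod_cast hT
    rcases Nat.eq_zero_or_pos n with hn | hn
    · -- final step : t = T
      subst hn
      have htT : t = T := by omega
      have hnt : ¬ t < T := by omega
      have hL : ((t:ℤ) - 1) = ((T:ℤ) - 1) := by rw [htT]
      have hplan : optPlan T g t = if g then 2 else 3 := by
        unfold optPlan; rw [if_neg hnt]
      rw [dRetP, dRetP, hplan, hL]
      cases g
      · have e3 : stepP 0 ((T:ℤ)-1) ((((T:ℤ)-1), 0), false) 3 = ((((T:ℤ)-1), -1), false) :=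
          step_move _ _ _ _ _ _ (by rw [dir3, Prod.mk_add_mk]; simp [Prod.ext_iff]; try omega)
            (by simp [validP]; try omega)
        rw [if_neg (Bool.false_ne_true), rew_final T t _ _ hnt, e3,
          if_pos (by simp [goalCell])]
        ring
      · have e2 : stepP 0 ((T:ℤ)-1) ((((T:ℤ)-1), 0), true) 2 = ((((T:ℤ)-1), 1), true) :=
          step_move _ _ _ _ _ _ (by rw [dir2, Prod.mk_add_mk]; simp [Prod.ext_iff]; try omega)
            (by simp [validP]; try omega)
        rw [if_pos rfl, rew_final T t _ _ hnt, e2, if_pos (by simp [goalCell])]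
        ring
    · -- corridor step : t < T
      have htT : t < T := by omega
      have hplan : optPlan T g t = 1 := by unfold optPlan; rw [if_pos htT]
      have e1 : stepP 0 ((T:ℤ)-1) (((t:ℤ)-1, 0), g) 1 = (((t:ℤ), 0), g) :=
        step_move _ _ _ _ _ _ (by rw [dir1, Prod.mk_add_mk]; simp [Prod.ext_iff]; try omega)
          (by simp [validP]; try omega)
      have r1 : rewP T t (((t:ℤ)-1, 0), g) 1 = 0 :=
        rew_corridor_zero T t hT _ _ htT (by rw [e1]; try simp; try omega)
      rw [dRetP, hplan, r1, e1]
      have hc : ((t + 1 : ℕ) : ℤ) - 1 = (t : ℤ) := by push_cast; ring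
      have := ih (t + 1) (by omega) (by omega) (by omega)
      rw [hc] at this
      rw [this]
      ring

/-- in the Passive T-Maze with horizon `T`, the unique optimal policy (Right
for `T-1` steps, then toward the revealed goal) has expected return `1` (averaging over
the uniformly sampled goal), while every Markovian (context length 1, i.e. observation-
based) policy has expected return at most `1/2`. -/
theorem passive_tmaze_optimal_vs_markovian (T : ℕ) (hT : 2 ≤ T) :
    (dRetP T (optPlan T true) T 1 ((0, 0), true) +
        dRetP T (optPlan T false) T 1 ((0, 0), false)) / 2 = 1 ∧
    ∀ π : TObs → Fin 4 → ℝ, (∀ o a, 0 ≤ π o a) → (∀ o, ∑ a, π o a = 1) →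
      (mRetP T π T 1 ((0, 0), true) + mRetP T π T 1 ((0, 0), false)) / 2 ≤ 1 / 2 := by
  have hzero : (((1:ℕ):ℤ) - 1, (0:ℤ)) = ((0:ℤ), (0:ℤ)) := by norm_num
  constructor
  · have h1 := opt_ret T hT true T 1 (by omega) (by omega) (by omega)
    have h2 := opt_ret T hT false T 1 (by omega) (by omega) (by omega)
    rw [hzero] at h1 h2
    rw [h1, h2]
    norm_num
  · intro π hπ0 hπ1
    obtain ⟨m, rfl⟩ : ∃ m, T = m + 2 := ⟨T - 2, by omega⟩
    set T := m + 2 with hTdef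
    have hT' : (2 : ℤ) ≤ (T : ℤ) := by exact_mod_cast hT
    have key : ∀ g : Bool, mRetP T π (m + 2) 1 (((0:ℤ), (0:ℤ)), g) ≤
        max (mRetP T π (m + 1) 2 (((1:ℤ), 0), g)) 0 := by
      intro g
      have e0 : stepP 0 ((T:ℤ)-1) (((0:ℤ), 0), g) 0 = (((0:ℤ), 0), g) :=
        step_stay _ _ _ _ _ (by rw [dir0, Prod.mk_add_mk]; simp [validP]; try omega)
      have e1 : stepP 0 ((T:ℤ)-1) (((0:ℤ), 0), g) 1 = (((1:ℤ), 0), g) :=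
        step_move _ _ _ _ _ _ (by rw [dir1, Prod.mk_add_mk]; simp [Prod.ext_iff]; try omega)
          (by simp [validP]; try omega)
      have e2 : stepP 0 ((T:ℤ)-1) (((0:ℤ), 0), g) 2 = (((0:ℤ), 0), g) :=
        step_stay _ _ _ _ _ (by rw [dir2, Prod.mk_add_mk]; simp [validP]; try omega)
      have e3 : stepP 0 ((T:ℤ)-1) (((0:ℤ), 0), g) 3 = (((0:ℤ), 0), g) :=
        step_stay _ _ _ _ _ (by rw [dir3, Prod.mk_add_mk]; simp [validP]; try omega)
      have h1T : 1 < T := by omega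
      have r1 : rewP T 1 (((0:ℤ), 0), g) 1 = 0 :=
        rew_corridor_zero T 1 hT _ _ h1T (by rw [e1]; try simp; try omega)
      have r0 : rewP T 1 (((0:ℤ), 0), g) 0 ≤ 0 := rew_corridor_nonpos T 1 hT _ _ h1T
      have r2 : rewP T 1 (((0:ℤ), 0), g) 2 ≤ 0 := rew_corridor_nonpos T 1 hT _ _ h1T
      have r3 : rewP T 1 (((0:ℤ), 0), g) 3 ≤ 0 := rew_corridor_nonpos T 1 hT _ _ h1T
      have v0 : mRetP T π (m + 1) 2 (((0:ℤ), 0), g) ≤ 0 :=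
        behind_nonpos T hT π hπ0 (m + 1) 2 _ (by omega) (by simp [validP]; try omega)
          (by try push_cast; try simp; try omega)
      have hb : mRetP T π (m + 2) 1 (((0:ℤ), (0:ℤ)), g) ≤
          π (.oracle g) 1 * mRetP T π (m + 1) 2 (((1:ℤ), 0), g) := by
        rw [show m + 2 = (m + 1) + 1 from rfl, mRetP, Fin.sum_univ_four,
          obs_oracle, e0, e1, e2, e3, r1]
        have hp0 := hπ0 (TObs.oracle g) 0
        have hp2 := hπ0 (TObs.oracle g) 2
        have hp3 := hπ0 (TObs.oracle g) 3
        nlinarith [mul_nonpos_of_nonneg_of_nonpos hp0 (add_nonpos r0 v0),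
          mul_nonpos_of_nonneg_of_nonpos hp2 (add_nonpos r2 v0),
          mul_nonpos_of_nonneg_of_nonpos hp3 (add_nonpos r3 v0)]
      have hπ1g : π (.oracle g) 1 ≤ 1 := by
        have hsum := hπ1 (TObs.oracle g)
        rw [Fin.sum_univ_four] at hsum
        have := hπ0 (TObs.oracle g) 0
        have := hπ0 (TObs.oracle g) 2
        have := hπ0 (TObs.oracle g) 3
        linarith
      have hπ0g : 0 ≤ π (.oracle g) 1 := hπ0 _ _
      calc mRetP T π (m + 2) 1 (((0:ℤ), (0:ℤ)), g)
          ≤ π (.oracle g) 1 * mRetP T π (m + 1) 2 (((1:ℤ), 0), g) := hb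
        _ ≤ π (.oracle g) 1 * max (mRetP T π (m + 1) 2 (((1:ℤ), 0), g)) 0 :=
            mul_le_mul_of_nonneg_left (le_max_left _ _) hπ0g
        _ ≤ 1 * max (mRetP T π (m + 1) 2 (((1:ℤ), 0), g)) 0 :=
            mul_le_mul_of_nonneg_right hπ1g (le_max_right _ _)
        _ = max (mRetP T π (m + 1) 2 (((1:ℤ), 0), g)) 0 := one_mul _
      done
    have hpair := pair_bound T hT π hπ0 hπ1 (m + 1) 2 (by omega) (by omega)
    have hc : ((2:ℕ):ℤ) - 1 = (1:ℤ) := by norm_num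
    rw [hc] at hpair
    have kt := key true
    have kf := key false
    have : mRetP T π (m + 2) 1 (((0:ℤ), (0:ℤ)), true) +
        mRetP T π (m + 2) 1 (((0:ℤ), (0:ℤ)), false) ≤ 1 := by linarith
    calc (mRetP T π T 1 ((0, 0), true) + mRetP T π T 1 ((0, 0), false)) / 2
        ≤ 1 / 2 := by rw [hTdef] at *; linarith
end
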